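/- Let 0 = t₀ < s₀ < t₁ < s₁ < ⋯ be a schedule with t_m → ∞, and suppose V : [0,∞) → [0,∞) satisfies, for every m, the two-sided recursion V(s_m) ≤ V(t_m)e^{−μ₁(s_m−t_m)} and V(t_{m+1}) ≤ V(s_m)e^{μ₂(t_{m+1}−s_m)}, and within intervals V(t) ≤ V(t_m)e^{−μ₁(t−t_m)} on [t_m,s_m) and V(t) ≤ V(s_m)e^{μ₂(t−s_m)} on [s_m,t_{m+1}). Then for every t ≥ 0, V(t) ≤ V(0)·exp(−μ₁M(t,0) + μ₂M^c(t,0)), where M(t,0) = Σ_{m: s_m ≤ t}(s_m − t_m) + max(0, min(t,s_{m*}) − t_{m*}) is the accumulated communication time up to t and M^c(t,0) = t − M(t,0). -/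
import Mathlib


theorem stmt19 (ts ss : ℕ → ℝ) (ht0 : ts 0 = 0)
    (horder : ∀ m, ts m < ss m ∧ ss m < ts (m + 1))
    (htend : Filter.Tendsto ts Filter.atTop Filter.atTop)
    (V : ℝ → ℝ) (hV : ∀ t ≥ (0:ℝ), 0 ≤ V t)
    (μ₁ μ₂ : ℝ) (hμ₁ : 0 < μ₁) (hμ₂ : 0 < μ₂)
    (hrec1 : ∀ m, V (ss m) ≤ V (ts m) * Real.exp (-μ₁ * (ss m - ts m)))
    (hrec2 : ∀ m, V (ts (m + 1)) ≤ V (ss m) * Real.exp (μ₂ * (ts (m + 1) - ss m)))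
    (hdec : ∀ m, ∀ t ∈ Set.Ico (ts m) (ss m),
      V t ≤ V (ts m) * Real.exp (-μ₁ * (t - ts m)))
    (hgrow : ∀ m, ∀ t ∈ Set.Ico (ss m) (ts (m + 1)),
      V t ≤ V (ss m) * Real.exp (μ₂ * (t - ss m))) :
    ∀ t ≥ (0:ℝ), ∀ mstar : ℕ, ts mstar ≤ t → t < ts (mstar + 1) →
      V t ≤ V 0 * Real.exp
        (-μ₁ * ((∑ m ∈ Finset.range mstar, (ss m - ts m)) +
            max 0 (min t (ss mstar) - ts mstar)) +
         μ₂ * (t - ((∑ m ∈ Finset.range mstar, (ss m - ts m)) +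
            max 0 (min t (ss mstar) - ts mstar)))) := by
  have hts_nonneg : ∀ m, 0 ≤ ts m := by
    intro m
    induction m with
    | zero => simp [ht0]
    | succ n ih => exact le_of_lt (lt_of_le_of_lt ih ((horder n).1.trans (horder n).2))
  have hss_nonneg : ∀ m, 0 ≤ ss m := fun m => (hts_nonneg m).trans (horder m).1.le
  set S : ℕ → ℝ := fun m => ∑ k ∈ Finset.range m, (ss k - ts k) with hS
  have key : ∀ m, V (ts m) ≤ V 0 * Real.exp (-μ₁ * S m + μ₂ * (ts m - S m)) := by
    intro m
    induction m with
    | zero => simp [hS, ht0]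
    | succ n ih =>
      have hSn : S (n + 1) = S n + (ss n - ts n) := by
        simp [hS, Finset.sum_range_succ]; ring
      calc V (ts (n + 1)) ≤ V (ss n) * Real.exp (μ₂ * (ts (n + 1) - ss n)) := hrec2 n
        _ ≤ (V (ts n) * Real.exp (-μ₁ * (ss n - ts n))) * Real.exp (μ₂ * (ts (n + 1) - ss n)) :=
            mul_le_mul_of_nonneg_right (hrec1 n) (Real.exp_nonneg _)
        _ ≤ ((V 0 * Real.exp (-μ₁ * S n + μ₂ * (ts n - S n))) * Real.exp (-μ₁ * (ss n - ts n)))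
              * Real.exp (μ₂ * (ts (n + 1) - ss n)) :=
            mul_le_mul_of_nonneg_right
              (mul_le_mul_of_nonneg_right ih (Real.exp_nonneg _)) (Real.exp_nonneg _)
        _ = V 0 * Real.exp (-μ₁ * S (n + 1) + μ₂ * (ts (n + 1) - S (n + 1))) := by
            rw [hSn, mul_assoc, mul_assoc, ← Real.exp_add, ← Real.exp_add]
            ring_nf
  intro t ht mstar h1 h2
  rcases lt_or_ge t (ss mstar) with hcase | hcase
  · have hmin : min t (ss mstar) = t := min_eq_left hcase.le
    have hmax : max 0 (t - ts mstar) = t - ts mstar := max_eq_right (by linarith)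
    have hbd := hdec mstar t ⟨h1, hcase⟩
    calc V t ≤ V (ts mstar) * Real.exp (-μ₁ * (t - ts mstar)) := hbd
      _ ≤ (V 0 * Real.exp (-μ₁ * S mstar + μ₂ * (ts mstar - S mstar)))
            * Real.exp (-μ₁ * (t - ts mstar)) :=
          mul_le_mul_of_nonneg_right (key mstar) (Real.exp_nonneg _)
      _ = V 0 * Real.exp (-μ₁ * (S mstar + max 0 (min t (ss mstar) - ts mstar)) +
            μ₂ * (t - (S mstar + max 0 (min t (ss mstar) - ts mstar)))) := by
          rw [hmin, hmax, mul_assoc, ← Real.exp_add]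
          ring_nf
  · have hmin : min t (ss mstar) = ss mstar := min_eq_right hcase
    have hmax : max 0 (ss mstar - ts mstar) = ss mstar - ts mstar :=
      max_eq_right (by linarith [(horder mstar).1])
    have hbd := hgrow mstar t ⟨hcase, h2⟩
    calc V t ≤ V (ss mstar) * Real.exp (μ₂ * (t - ss mstar)) := hbd
      _ ≤ (V (ts mstar) * Real.exp (-μ₁ * (ss mstar - ts mstar)))
            * Real.exp (μ₂ * (t - ss mstar)) :=
          mul_le_mul_of_nonneg_right (hrec1 mstar) (Real.exp_nonneg _)
      _ ≤ ((V 0 * Real.exp (-μ₁ * S mstar + μ₂ * (ts mstar - S mstar)))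
            * Real.exp (-μ₁ * (ss mstar - ts mstar))) * Real.exp (μ₂ * (t - ss mstar)) :=
          mul_le_mul_of_nonneg_right
            (mul_le_mul_of_nonneg_right (key mstar) (Real.exp_nonneg _)) (Real.exp_nonneg _)
      _ = V 0 * Real.exp (-μ₁ * (S mstar + max 0 (min t (ss mstar) - ts mstar)) +
            μ₂ * (t - (S mstar + max 0 (min t (ss mstar) - ts mstar)))) := by
          rw [hmin, hmax, mul_assoc, mul_assoc, ← Real.exp_add, ← Real.exp_add]
          ring_nf
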